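/- Let F be a normalized finite Orlicz function with F(s) > 0 for all s > 0 and lim_{t→∞} F(t)/t = ∞, and let G ∈ E_F. Define the Orlicz function Ĝ on [0,∞) by Ĝ(t) = G(t) for 0 ≤ t ≤ 1/2 and Ĝ(t) = G(1/2) + 2(1 − G(1/2))(t − 1/2) for t ≥ 1/2 (so Ĝ is linear on [1/2,∞) with Ĝ(1) = 1). Then there exist pairwise disjoint Borel subsets (A_n)_{n∈ℕ} of [0,1] with positive Lebesgue measure, reals s_n > 0 with F(s_n)·|A_n| = 1, and a constant C ≥ 1, such that for every finitely supported real sequence (a_n): C^{-1} N_G(a) ≤ ‖∑_n a_n s_n χ_{A_n}‖_{L_F} ≤ C N_G(a), where ‖g‖_{L_F} = inf{t > 0 : ∫_0^1 F(|g|/t) dx ≤ 1} is the Luxemburg norm on [0,1] and N_G(a) = inf{t > 0 : ∑_n Ĝ(|a_n|/t) ≤ 1} is the Luxemburg norm of the Orlicz sequence space ℓ_G. In other words, (s_n χ_{A_n})_{n∈ℕ} is a disjointly supported sequence in L_F([0,1]) equivalent to the unit vector system of ℓ_G. -/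

import Mathlib

/-!
Choose `s n → ∞` so fast that `F (s n) ≥ 2 ^ (n + 1)` and the flow `F_{s n}` is within
`2 ^ -(n + 2)` of `G` on `[0, 1/2]`; consecutive intervals `A n` of length `1 / F (s n)` then fit
into `[0, 1]`. By disjointness, the `F`-modular of `∑ a n s n χ_{A n}` at scale `t` is
`∑ F_{s n} (|a n| / t)`. Since `Φ (u / 2) ≤ Φ u / 2` for `Φ = F_{s n}` and `Φ = Ĝ` on the range
`u ≤ 1` that a modular bounded by `1` forces, a modular bound `≤ 1` for one of them at scale `t`
gives one for the other at scale `2 t`, the approximation errors costing at most `1/2` in total.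
Hence the two Luxemburg norms agree up to the factor `2`.
-/

open Set Filter Topology MeasureTheory

/-- `G` belongs to `E_F = ⋂_{b ≥ 0} E_{F,b}`, where `E_{F,b}` is the closure, in the topology
of uniform convergence on `[0,1/2]`, of the set of flows `{F_s : s > b}`,
`F_s (t) = F (s t) / F s`. (Only the values of `G` on `[0,1/2]` are relevant.) -/
def MemFlowClosure (F : ℝ → ℝ) (G : ℝ → ℝ) : Prop :=
  ∀ b : ℝ, 0 ≤ b → ∀ ε : ℝ, 0 < ε → ∃ s : ℝ, b < s ∧
    ∀ t ∈ Icc (0:ℝ) (1/2), |F (s * t) / F s - G t| ≤ ε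

open Function

theorem ConvexOn.map_mul_le {f : ℝ → ℝ} (hf : ConvexOn ℝ (Ici 0) f) (h0 : f 0 = 0)
    {x l : ℝ} (hx : 0 ≤ x) (hl : l ∈ Icc (0:ℝ) 1) : f (l * x) ≤ l * f x := by
  simpa [h0] using
    hf.2 (mem_Ici.mpr le_rfl) (mem_Ici.mpr hx) (sub_nonneg.mpr hl.2) hl.1 (by ring)

theorem tendsto_atTop_of_tendsto_div_atTop {f : ℝ → ℝ}
    (hf : Tendsto (fun t => f t / t) atTop atTop) : Tendsto f atTop atTop :=
  (hf.atTop_mul_atTop₀ tendsto_id).congr' <| by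
    filter_upwards [eventually_ne_atTop 0] with t ht using div_mul_cancel₀ (f t) ht

noncomputable def flow (F : ℝ → ℝ) (s t : ℝ) : ℝ := F (s * t) / F s

section Flow

variable {F : ℝ → ℝ} {s t : ℝ}

theorem flow_one (hFs : F s ≠ 0) : flow F s 1 = 1 := by
  simp [flow, hFs]

theorem flow_nonneg (hF0 : F 0 = 0) (hFpos : ∀ x, 0 < x → 0 < F x) (hs : 0 < s) (ht : 0 ≤ t) :
    0 ≤ flow F s t := by
  refine div_nonneg ?_ (hFpos s hs).le
  rcases (mul_nonneg hs.le ht).eq_or_lt with h | h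
  · rw [← h, hF0]
  · exact (hFpos _ h).le

theorem flow_mul_le (hF : ConvexOn ℝ (Ici 0) F) (hF0 : F 0 = 0) (hs : 0 ≤ s) (hFs : 0 < F s)
    {l : ℝ} (ht : 0 ≤ t) (hl : l ∈ Icc (0:ℝ) 1) : flow F s (l * t) ≤ l * flow F s t := by
  rw [flow, flow, mul_left_comm, ← mul_div_assoc]
  exact div_le_div_of_nonneg_right (hF.map_mul_le hF0 (mul_nonneg hs ht) hl) hFs.le

theorem flow_le_self (hF : ConvexOn ℝ (Ici 0) F) (hF0 : F 0 = 0) (hs : 0 ≤ s) (hFs : 0 < F s)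
    (ht : t ∈ Icc (0:ℝ) 1) : flow F s t ≤ t := by
  simpa [flow_one hFs.ne'] using flow_mul_le hF hF0 hs hFs zero_le_one ht

theorem le_flow_of_one_le (hF : ConvexOn ℝ (Ici 0) F) (hF0 : F 0 = 0) (hs : 0 ≤ s)
    (hFs : 0 < F s) (ht : 1 ≤ t) : t ≤ flow F s t := by
  have ht0 : 0 < t := zero_lt_one.trans_le ht
  have h := flow_mul_le hF hF0 hs hFs ht0.le ⟨inv_nonneg.mpr ht0.le, inv_le_one_of_one_le₀ ht⟩
  rw [inv_mul_cancel₀ ht0.ne', flow_one hFs.ne', inv_mul_eq_div, le_div_iff₀ ht0, one_mul] at h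
  exact h

end Flow

namespace MemFlowClosure

variable {F G : ℝ → ℝ}

theorem exists_seq (hFtop : Tendsto F atTop atTop) (hG : MemFlowClosure F G) (M ε : ℕ → ℝ)
    (hε : ∀ n, 0 < ε n) : ∃ s : ℕ → ℝ, ∀ n, 0 < s n ∧ M n ≤ F (s n) ∧
      ∀ t ∈ Icc (0:ℝ) (1/2), |flow F (s n) t - G t| ≤ ε n := by
  have h : ∀ n, ∃ s, 0 < s ∧ M n ≤ F s ∧ ∀ t ∈ Icc (0:ℝ) (1/2), |flow F s t - G t| ≤ ε n := by
    intro n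
    obtain ⟨B, hB⟩ := eventually_atTop.mp (hFtop.eventually_ge_atTop (M n))
    obtain ⟨s, hBs, hs⟩ := hG (max B 0) (le_max_right _ _) (ε n) (hε n)
    exact ⟨s, (le_max_right _ _).trans_lt hBs, hB s ((le_max_left _ _).trans hBs.le), hs⟩
  choose s hs using h
  exact ⟨s, hs⟩

theorem exists_tendsto (hG : MemFlowClosure F G) : ∃ s : ℕ → ℝ, (∀ n, 0 < s n) ∧
    ∀ t ∈ Icc (0:ℝ) (1/2), Tendsto (fun n => flow F (s n) t) atTop (𝓝 (G t)) := by
  choose s hs hclose using fun n : ℕ => hG 0 le_rfl (1 / (n + 1)) Nat.one_div_pos_of_nat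
  refine ⟨s, hs, fun t ht => tendsto_iff_dist_tendsto_zero.mpr ?_⟩
  exact squeeze_zero (fun _ => dist_nonneg) (fun n => (Real.dist_eq _ _).trans_le (hclose n t ht))
    tendsto_one_div_add_atTop_nhds_zero_nat

theorem nonneg (hF0 : F 0 = 0) (hFpos : ∀ x, 0 < x → 0 < F x) (hG : MemFlowClosure F G)
    {t : ℝ} (ht : t ∈ Icc (0:ℝ) (1/2)) : 0 ≤ G t := by
  obtain ⟨s, hs, hlim⟩ := hG.exists_tendsto
  exact ge_of_tendsto' (hlim t ht) fun n => flow_nonneg hF0 hFpos (hs n) ht.1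

theorem apply_mul_le (hF : ConvexOn ℝ (Ici 0) F) (hF0 : F 0 = 0) (hFpos : ∀ x, 0 < x → 0 < F x)
    (hG : MemFlowClosure F G) {p : ℝ} (hp : p ∈ Icc (0:ℝ) (1/2)) {l : ℝ} (hl : l ∈ Icc (0:ℝ) 1) :
    G (l * p) ≤ l * G p := by
  obtain ⟨s, hs, hlim⟩ := hG.exists_tendsto
  have hlp : l * p ∈ Icc (0:ℝ) (1/2) :=
    ⟨mul_nonneg hl.1 hp.1, (mul_le_of_le_one_left hp.1 hl.2).trans hp.2⟩
  exact le_of_tendsto_of_tendsto' (hlim _ hlp) ((hlim p hp).const_mul l) fun n =>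
    flow_mul_le hF hF0 (hs n).le (hFpos _ (hs n)) hp.1 hl

theorem apply_half_le (hF : ConvexOn ℝ (Ici 0) F) (hF0 : F 0 = 0) (hFpos : ∀ x, 0 < x → 0 < F x)
    (hG : MemFlowClosure F G) : G (1/2) ≤ 1/2 := by
  obtain ⟨s, hs, hlim⟩ := hG.exists_tendsto
  exact le_of_tendsto' (hlim _ ⟨by norm_num, le_rfl⟩) fun n =>
    flow_le_self hF hF0 (hs n).le (hFpos _ (hs n)) ⟨by norm_num, by norm_num⟩

end MemFlowClosure

noncomputable def extendLinearFromHalf (G : ℝ → ℝ) (t : ℝ) : ℝ :=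
  if t ≤ 1/2 then G t else G (1/2) + 2 * (1 - G (1/2)) * (t - 1/2)

section ExtendLinearFromHalf

variable {G : ℝ → ℝ} {u : ℝ}

theorem extendLinearFromHalf_of_le (hu : u ≤ 1/2) : extendLinearFromHalf G u = G u :=
  if_pos hu

theorem extendLinearFromHalf_nonneg (hG0 : ∀ t ∈ Icc (0:ℝ) (1/2), 0 ≤ G t)
    (hhalf : G (1/2) ≤ 1/2) (hu : 0 ≤ u) : 0 ≤ extendLinearFromHalf G u := by
  unfold extendLinearFromHalf
  split_ifs with h
  · exact hG0 u ⟨hu, h⟩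
  · have := hG0 (1/2) ⟨by norm_num, le_rfl⟩
    push Not at h
    nlinarith

theorem le_one_of_extendLinearFromHalf_le_one (hhalf : G (1/2) ≤ 1/2)
    (h : extendLinearFromHalf G u ≤ 1) : u ≤ 1 := by
  unfold extendLinearFromHalf at h
  split_ifs at h with hu
  · linarith
  · push Not at hu
    nlinarith

theorem apply_half_le_extendLinearFromHalf
    (hGmul : ∀ p ∈ Icc (0:ℝ) (1/2), ∀ l ∈ Icc (0:ℝ) 1, G (l * p) ≤ l * G p)
    (hhalf : G (1/2) ≤ 1/2) (hu : u ∈ Icc (0:ℝ) 1) : G (u / 2) ≤ extendLinearFromHalf G u / 2 := by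
  unfold extendLinearFromHalf
  split_ifs with h
  · have := hGmul u ⟨hu.1, h⟩ (1/2) ⟨by norm_num, by norm_num⟩
    rw [one_div_mul_eq_div] at this
    linarith
  · have := hGmul (1/2) ⟨by norm_num, le_rfl⟩ u hu
    rw [mul_one_div] at this
    push Not at h
    nlinarith [mul_nonneg (sub_nonneg.mpr h.le) (sub_nonneg.mpr hhalf)]

end ExtendLinearFromHalf

section FlowApproximation

variable {F G : ℝ → ℝ} {s ε u : ℝ}

theorem flow_half_le_extendLinearFromHalf
    (hGmul : ∀ p ∈ Icc (0:ℝ) (1/2), ∀ l ∈ Icc (0:ℝ) 1, G (l * p) ≤ l * G p)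
    (hhalf : G (1/2) ≤ 1/2) (hclose : ∀ t ∈ Icc (0:ℝ) (1/2), |flow F s t - G t| ≤ ε)
    (hu : 0 ≤ u) (h : extendLinearFromHalf G u ≤ 1) :
    flow F s (u / 2) ≤ extendLinearFromHalf G u / 2 + ε := by
  have hu1 := le_one_of_extendLinearFromHalf_le_one hhalf h
  have hG := apply_half_le_extendLinearFromHalf hGmul hhalf ⟨hu, hu1⟩
  linarith [(abs_le.mp (hclose (u / 2) ⟨by linarith, by linarith⟩)).2]

theorem extendLinearFromHalf_half_le_flow (hF : ConvexOn ℝ (Ici 0) F) (hF0 : F 0 = 0)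
    (hs : 0 ≤ s) (hFs : 0 < F s) (hclose : ∀ t ∈ Icc (0:ℝ) (1/2), |flow F s t - G t| ≤ ε)
    (hu : 0 ≤ u) (h : flow F s u ≤ 1) :
    extendLinearFromHalf G (u / 2) ≤ flow F s u / 2 + ε := by
  have hu1 : u ≤ 1 := by
    by_contra! hu1
    linarith [le_flow_of_one_le hF hF0 hs hFs hu1.le]
  have hF2 := flow_mul_le hF hF0 hs hFs hu ⟨by norm_num, by norm_num⟩ (l := 1/2)
  rw [one_div_mul_eq_div] at hF2
  rw [extendLinearFromHalf_of_le (by linarith)]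
  linarith [(abs_le.mp (hclose (u / 2) ⟨by linarith, by linarith⟩)).1]

end FlowApproximation

def luxemburgSet {ι : Type*} (Φ : ι → ℝ → ℝ) (Λ : Finset ι) (a : ι → ℝ) : Set ℝ :=
  {t | 0 < t ∧ ∑ n ∈ Λ, Φ n (|a n| / t) ≤ 1}

section Luxemburg

variable {ι : Type*} {Λ : Finset ι} {a : ι → ℝ}

theorem bddBelow_luxemburgSet (Φ : ι → ℝ → ℝ) : BddBelow (luxemburgSet Φ Λ a) :=
  ⟨0, fun _ ht => ht.1.le⟩

theorem luxemburgSet_nonempty {Φ : ι → ℝ → ℝ} (hΦ : ∀ n, ∀ u ∈ Icc (0:ℝ) 1, Φ n u ≤ u) :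
    (luxemburgSet Φ Λ a).Nonempty := by
  set S := ∑ n ∈ Λ, |a n|
  have hS : 0 ≤ S := Finset.sum_nonneg fun n _ => abs_nonneg (a n)
  have hS1 : 0 < S + 1 := by linarith
  refine ⟨S + 1, hS1, ?_⟩
  calc ∑ n ∈ Λ, Φ n (|a n| / (S + 1)) ≤ ∑ n ∈ Λ, |a n| / (S + 1) := by
        refine Finset.sum_le_sum fun n hn => hΦ n _ ⟨by positivity, ?_⟩
        rw [div_le_one hS1]
        linarith [Finset.single_le_sum (fun k _ => abs_nonneg (a k)) hn]
    _ = S / (S + 1) := (Finset.sum_div ..).symm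
    _ ≤ 1 := (div_le_one hS1).mpr (by linarith)

theorem two_mul_mem_luxemburgSet {φ ψ : ι → ℝ → ℝ} {ε : ι → ℝ} {t : ℝ}
    (hφ : ∀ n u, 0 ≤ u → 0 ≤ φ n u)
    (hcmp : ∀ n u, 0 ≤ u → φ n u ≤ 1 → ψ n (u / 2) ≤ φ n u / 2 + ε n)
    (hε : ∑ n ∈ Λ, ε n ≤ 1/2) (ht : t ∈ luxemburgSet φ Λ a) : 2 * t ∈ luxemburgSet ψ Λ a := by
  obtain ⟨ht0, hsum⟩ := ht
  have hu : ∀ n, 0 ≤ |a n| / t := fun n => div_nonneg (abs_nonneg _) ht0.le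
  refine ⟨by positivity, ?_⟩
  calc ∑ n ∈ Λ, ψ n (|a n| / (2 * t)) = ∑ n ∈ Λ, ψ n (|a n| / t / 2) := by
        simp_rw [div_div, mul_comm t]
    _ ≤ ∑ n ∈ Λ, (φ n (|a n| / t) / 2 + ε n) := Finset.sum_le_sum fun n hn =>
        hcmp n _ (hu n) <| (Finset.single_le_sum (f := fun k => φ k (|a k| / t))
          (fun k _ => hφ k _ (hu k)) hn).trans hsum
    _ = (∑ n ∈ Λ, φ n (|a n| / t)) / 2 + ∑ n ∈ Λ, ε n := by
        rw [Finset.sum_add_distrib, Finset.sum_div]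
    _ ≤ 1 := by linarith

end Luxemburg

theorem csInf_le_mul_csInf {S T : Set ℝ} {c : ℝ} (hc : 0 < c) (hS : S.Nonempty)
    (hT : BddBelow T) (h : ∀ t ∈ S, c * t ∈ T) : sInf T ≤ c * sInf S := by
  rw [← div_le_iff₀' hc]
  exact le_csInf hS fun t ht => (div_le_iff₀' hc).mpr (csInf_le hT (h t ht))

theorem sum_half_pow_add_le (Λ : Finset ℕ) (k : ℕ) :
    ∑ n ∈ Λ, (1/2 : ℝ) ^ (n + k) ≤ 2 * (1/2) ^ k := by
  have h := summable_geometric_two.sum_le_tsum Λ fun n _ => by positivity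
  rw [tsum_geometric_two] at h
  simp_rw [pow_add, ← Finset.sum_mul]
  exact mul_le_mul_of_nonneg_right h (by positivity)

theorem exists_pairwise_disjoint_subset_Icc (ℓ : ℕ → ℝ) (hℓ : ∀ n, 0 ≤ ℓ n)
    (hsum : ∀ n, ∑ k ∈ Finset.range n, ℓ k ≤ 1) :
    ∃ A : ℕ → Set ℝ, (∀ n, MeasurableSet (A n) ∧ A n ⊆ Icc 0 1 ∧
      volume (A n) = ENNReal.ofReal (ℓ n)) ∧ Pairwise (Disjoint on A) := by
  set c : ℕ → ℝ := fun n => ∑ k ∈ Finset.range n, ℓ k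
  have hc : Monotone c := monotone_nat_of_le_succ fun n => by
    simp [c, Finset.sum_range_succ, hℓ n]
  refine ⟨fun n => Ico (c n) (c (n + 1)), fun n => ⟨measurableSet_Ico, ?_, ?_⟩,
    by simpa using hc.pairwise_disjoint_on_Ico_succ⟩
  · exact Ico_subset_Icc_self.trans (Icc_subset_Icc (Finset.sum_nonneg fun k _ => hℓ k) (hsum _))
  · simp [c, Real.volume_Ico, Finset.sum_range_succ]

theorem comp_sum_indicator {α ι : Type*} {Λ : Finset ι} {A : ι → Set α}
    (hA : Pairwise (Disjoint on A)) {Φ : ℝ → ℝ} (hΦ : Φ 0 = 0) (b : ι → ℝ) (x : α) :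
    Φ (∑ n ∈ Λ, (A n).indicator (fun _ => b n) x) =
      ∑ n ∈ Λ, (A n).indicator (fun _ => Φ (b n)) x := by
  by_cases hx : ∃ m ∈ Λ, x ∈ A m
  · obtain ⟨m, hm, hxm⟩ := hx
    have hout : ∀ n ∈ Λ, n ≠ m → ∀ f : α → ℝ, (A n).indicator f x = 0 := fun n _ hn f =>
      indicator_of_notMem (fun hxn => disjoint_left.mp (hA hn) hxn hxm) f
    rw [Finset.sum_eq_single_of_mem m hm (fun n hnΛ hn => hout n hnΛ hn _),
      Finset.sum_eq_single_of_mem m hm (fun n hnΛ hn => hout n hnΛ hn _),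
      indicator_of_mem hxm, indicator_of_mem hxm]
  · push Not at hx
    rw [Finset.sum_eq_zero fun n hn => indicator_of_notMem (hx n hn) _,
      Finset.sum_eq_zero fun n hn => indicator_of_notMem (hx n hn) _, hΦ]

theorem integral_comp_sum_indicator {α ι : Type*} [MeasurableSpace α] {μ : Measure α}
    [IsFiniteMeasure μ] (Λ : Finset ι) {A : ι → Set α} (hAm : ∀ n, MeasurableSet (A n))
    (hA : Pairwise (Disjoint on A)) {Φ : ℝ → ℝ} (hΦ : Φ 0 = 0) (b : ι → ℝ) :
    ∫ x, Φ (∑ n ∈ Λ, (A n).indicator (fun _ => b n) x) ∂μ = ∑ n ∈ Λ, μ.real (A n) * Φ (b n) := by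
  simp_rw [comp_sum_indicator hA hΦ]
  rw [integral_finsetSum Λ fun n _ => (integrable_const (Φ (b n))).indicator (hAm n)]
  simp [integral_indicator_const _ (hAm _)]

theorem setIntegral_sum_indicator_eq_sum_flow {F : ℝ → ℝ} (hF0 : F 0 = 0) {A : ℕ → Set ℝ}
    {s : ℕ → ℝ} (hAm : ∀ n, MeasurableSet (A n)) (hAsub : ∀ n, A n ⊆ Icc 0 1)
    (hA : Pairwise (Disjoint on A)) (hs : ∀ n, 0 < s n)
    (hvol : ∀ n, volume.real (A n) = (F (s n))⁻¹) (Λ : Finset ℕ) (a : ℕ → ℝ) (t : ℝ) :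
    ∫ x in Icc (0:ℝ) 1, F (|∑ n ∈ Λ, a n * (s n * (A n).indicator (fun _ => (1:ℝ)) x)| / t)
      = ∑ n ∈ Λ, flow F (s n) (|a n| / t) := by
  have hind : ∀ n x, a n * (s n * (A n).indicator (fun _ => (1:ℝ)) x)
      = (A n).indicator (fun _ => a n * s n) x := by
    intro n x
    by_cases hx : x ∈ A n <;> simp [hx]
  simp_rw [hind]
  rw [integral_comp_sum_indicator Λ hAm hA (Φ := fun y => F (|y| / t)) (by simp [hF0])]
  refine Finset.sum_congr rfl fun n _ => ?_
  rw [measureReal_restrict_apply (hAm n), inter_eq_self_of_subset_left (hAsub n), hvol n, flow,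
    abs_mul, abs_of_pos (hs n), inv_mul_eq_div, mul_comm, mul_div_assoc]

theorem MemFlowClosure.exists_flow_approx_disjoint_sets {F G : ℝ → ℝ}
    (hFtop : Tendsto F atTop atTop) (hG : MemFlowClosure F G) :
    ∃ (s : ℕ → ℝ) (A : ℕ → Set ℝ),
      (∀ n, 0 < s n ∧ 0 < F (s n) ∧
        ∀ t ∈ Icc (0:ℝ) (1/2), |flow F (s n) t - G t| ≤ (1/2) ^ (n + 2)) ∧
      (∀ n, MeasurableSet (A n) ∧ A n ⊆ Icc 0 1 ∧ volume (A n) = ENNReal.ofReal (F (s n))⁻¹) ∧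
      Pairwise (Disjoint on A) := by
  obtain ⟨s, hs⟩ := hG.exists_seq hFtop (fun n => 2 ^ (n + 1)) (fun n => (1/2) ^ (n + 2))
    fun n => by positivity
  choose hs hFs hclose using hs
  have hFs_pos n : 0 < F (s n) := lt_of_lt_of_le (by positivity) (hFs n)
  have hlen n : (F (s n))⁻¹ ≤ (1/2) ^ (n + 1) := by
    rw [one_div_pow, ← one_div]
    exact one_div_le_one_div_of_le (by positivity) (hFs n)
  obtain ⟨A, hA, hdisj⟩ := exists_pairwise_disjoint_subset_Icc (fun n => (F (s n))⁻¹)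
    (fun n => (inv_pos.mpr (hFs_pos n)).le) fun m =>
      (Finset.sum_le_sum fun n _ => hlen n).trans <|
        (sum_half_pow_add_le _ 1).trans_eq (by norm_num)
  exact ⟨s, A, fun n => ⟨hs n, hFs_pos n, hclose n⟩, hA, hdisj⟩

theorem statement14_general (F : ℝ → ℝ)
    (hFconv : ConvexOn ℝ (Ici (0:ℝ)) F)
    (hF0 : F 0 = 0)
    (hFpos : ∀ s : ℝ, 0 < s → 0 < F s)
    (hsuper : Tendsto (fun t : ℝ => F t / t) atTop atTop)
    (G : ℝ → ℝ) (hG : MemFlowClosure F G)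
    (Ghat : ℝ → ℝ)
    (hGhat : ∀ t : ℝ,
      Ghat t = if t ≤ 1/2 then G t else G (1/2) + 2 * (1 - G (1/2)) * (t - 1/2)) :
    ∃ (A : ℕ → Set ℝ) (s : ℕ → ℝ) (C : ℝ),
      (∀ n, MeasurableSet (A n) ∧ A n ⊆ Icc (0:ℝ) 1 ∧ 0 < volume (A n)) ∧
      Pairwise (Function.onFun Disjoint A) ∧
      (∀ n, 0 < s n ∧ F (s n) * (volume (A n)).toReal = 1) ∧
      1 ≤ C ∧
      ∀ (Λ : Finset ℕ) (a : ℕ → ℝ),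
        C⁻¹ * sInf {t : ℝ | 0 < t ∧ ∑ n ∈ Λ, Ghat (|a n| / t) ≤ 1}
            ≤ sInf {t : ℝ | 0 < t ∧
                (∫ x in Icc (0:ℝ) 1,
                  F (|∑ n ∈ Λ, a n * (s n * (A n).indicator (fun _ => (1:ℝ)) x)| / t)) ≤ 1} ∧
        sInf {t : ℝ | 0 < t ∧
                (∫ x in Icc (0:ℝ) 1,
                  F (|∑ n ∈ Λ, a n * (s n * (A n).indicator (fun _ => (1:ℝ)) x)| / t)) ≤ 1}
            ≤ C * sInf {t : ℝ | 0 < t ∧ ∑ n ∈ Λ, Ghat (|a n| / t) ≤ 1} := by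
  obtain rfl : Ghat = extendLinearFromHalf G := funext hGhat
  have hGmul := fun p (hp : p ∈ Icc (0:ℝ) (1/2)) l (hl : l ∈ Icc (0:ℝ) 1) =>
    hG.apply_mul_le hFconv hF0 hFpos hp hl
  have hhalf := hG.apply_half_le hFconv hF0 hFpos
  obtain ⟨s, A, hs, hA, hdisj⟩ :=
    hG.exists_flow_approx_disjoint_sets (tendsto_atTop_of_tendsto_div_atTop hsuper)
  choose hs hFs hclose using hs
  have hvol n : volume.real (A n) = (F (s n))⁻¹ := by
    rw [measureReal_def, (hA n).2.2, ENNReal.toReal_ofReal (inv_pos.mpr (hFs n)).le]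
  refine ⟨A, s, 2, fun n => ⟨(hA n).1, (hA n).2.1, ?_⟩, hdisj,
    fun n => ⟨hs n, by rw [← measureReal_def, hvol n, mul_inv_cancel₀ (hFs n).ne']⟩,
    one_le_two, fun Λ a => ?_⟩
  · rw [(hA n).2.2]; exact ENNReal.ofReal_pos.mpr (inv_pos.mpr (hFs n))
  simp_rw [setIntegral_sum_indicator_eq_sum_flow hF0 (fun n => (hA n).1) (fun n => (hA n).2.1)
    hdisj hs hvol Λ a]
  have hε : ∑ n ∈ Λ, (1/2 : ℝ) ^ (n + 2) ≤ 1/2 := (sum_half_pow_add_le Λ 2).trans_eq (by norm_num)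
  have hGF : ∀ t ∈ luxemburgSet (fun _ => extendLinearFromHalf G) Λ a,
      2 * t ∈ luxemburgSet (fun n => flow F (s n)) Λ a := fun t =>
    two_mul_mem_luxemburgSet (fun _ _ hu => extendLinearFromHalf_nonneg
      (fun _ ht => hG.nonneg hF0 hFpos ht) hhalf hu)
      (fun n _ => flow_half_le_extendLinearFromHalf hGmul hhalf (hclose n)) hε
  have hFG : ∀ t ∈ luxemburgSet (fun n => flow F (s n)) Λ a,
      2 * t ∈ luxemburgSet (fun _ => extendLinearFromHalf G) Λ a := fun t =>
    two_mul_mem_luxemburgSet (fun n _ hu => flow_nonneg hF0 hFpos (hs n) hu)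
      (fun n _ => extendLinearFromHalf_half_le_flow hFconv hF0 (hs n).le (hFs n) (hclose n)) hε
  obtain ⟨t, ht⟩ : (luxemburgSet (fun n => flow F (s n)) Λ a).Nonempty :=
    luxemburgSet_nonempty fun n _ hu => flow_le_self hFconv hF0 (hs n).le (hFs n) hu
  refine ⟨?_, csInf_le_mul_csInf two_pos ⟨2 * t, hFG t ht⟩ (bddBelow_luxemburgSet _) hGF⟩
  rw [inv_mul_le_iff₀ two_pos]
  exact csInf_le_mul_csInf two_pos ⟨t, ht⟩ (bddBelow_luxemburgSet _) hFG

/-- Let `F` be a normalized finite Orlicz function with `F s > 0` for `s > 0`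
and `F t / t → ∞`, and let `G ∈ E_F`. Let `Ĝ` be the Orlicz function agreeing with `G` on
`[0,1/2]` and linear on `[1/2,∞)` with `Ĝ 1 = 1`. Then there are pairwise disjoint Borel sets
`A n ⊆ [0,1]` of positive measure, reals `s n > 0` with `F (s n) * |A n| = 1`, and `C ≥ 1`
such that the disjointly supported sequence `(s n · χ_{A n})` in `L_F([0,1])` is `C`-equivalent
to the unit vector system of the Orlicz sequence space `ℓ_G`: for all finitely supported `a`,
`C⁻¹ N_G(a) ≤ ‖∑ a n s n χ_{A n}‖_{L_F} ≤ C N_G(a)`. -/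
theorem statement14 (F : ℝ → ℝ)
    (hFconv : ConvexOn ℝ (Ici (0:ℝ)) F) (hFmono : MonotoneOn F (Ici (0:ℝ)))
    (hF0 : F 0 = 0) (hF1 : F 1 = 1)
    (hFpos : ∀ s : ℝ, 0 < s → 0 < F s)
    (hsuper : Tendsto (fun t : ℝ => F t / t) atTop atTop)
    (G : ℝ → ℝ) (hG : MemFlowClosure F G)
    (Ghat : ℝ → ℝ)
    (hGhat : ∀ t : ℝ,
      Ghat t = if t ≤ 1/2 then G t else G (1/2) + 2 * (1 - G (1/2)) * (t - 1/2)) :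
    ∃ (A : ℕ → Set ℝ) (s : ℕ → ℝ) (C : ℝ),
      (∀ n, MeasurableSet (A n) ∧ A n ⊆ Icc (0:ℝ) 1 ∧ 0 < volume (A n)) ∧
      Pairwise (Function.onFun Disjoint A) ∧
      (∀ n, 0 < s n ∧ F (s n) * (volume (A n)).toReal = 1) ∧
      1 ≤ C ∧
      ∀ (Λ : Finset ℕ) (a : ℕ → ℝ),
        C⁻¹ * sInf {t : ℝ | 0 < t ∧ ∑ n ∈ Λ, Ghat (|a n| / t) ≤ 1}
            ≤ sInf {t : ℝ | 0 < t ∧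
                (∫ x in Icc (0:ℝ) 1,
                  F (|∑ n ∈ Λ, a n * (s n * (A n).indicator (fun _ => (1:ℝ)) x)| / t)) ≤ 1} ∧
        sInf {t : ℝ | 0 < t ∧
                (∫ x in Icc (0:ℝ) 1,
                  F (|∑ n ∈ Λ, a n * (s n * (A n).indicator (fun _ => (1:ℝ)) x)| / t)) ≤ 1}
            ≤ C * sInf {t : ℝ | 0 < t ∧ ∑ n ∈ Λ, Ghat (|a n| / t) ≤ 1} :=
  statement14_general F hFconv hF0 hFpos hsuper G hG Ghat hGhat
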